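/- arXiv:2106.04047 — 5 statements merged into one kernel-verified Lean document; each statement's English description precedes it below -/
import Mathlib

section
/- Let x = (x_1, ..., x_M) be a vector of nonnegative reals, let K ≤ M be a positive integer, and let 0 < r < p < q < ∞. If ∑_{i=1}^M x_i^r = K, ∑_{i=1}^M x_i^p = K, and ∑_{i=1}^M x_i^q = K, then x is a K-hot vector: exactly K of its entries equal 1 and the remaining M−K entries equal 0. -/
/-- A vector is `K`-hot if exactly `K` of its entries equal 1 and the rest are 0. -/
def KHot {M : ℕ} (x : Fin M → ℝ) (K : ℕ) : Prop :=
  (Finset.univ.filter (fun i => x i = 1)).card = K ∧ ∀ i, x i = 1 ∨ x i = 0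

open Real

/-- Strict two-term weighted AM-GM. -/
lemma strict_amgm_aux {w a b : ℝ} (hw : 0 < w) (hw1 : w < 1) (ha : 0 < a) (hb : 0 < b)
    (hab : a ≠ b) : a ^ w * b ^ (1 - w) < w * a + (1 - w) * b := by
  have hs : a / b - 1 ≠ 0 := by
    intro h
    exact hab (by field_simp at h; linarith)
  have hs' : -1 ≤ a / b - 1 := by
    have : 0 < a / b := div_pos ha hb
    linarith
  have key := rpow_one_add_lt_one_add_mul_self hs' hs hw hw1
  rw [add_sub_cancel] at key
  have h2 : (a / b) ^ w * b < (1 + w * (a / b - 1)) * b :=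
    mul_lt_mul_of_pos_right key hb
  calc a ^ w * b ^ (1 - w) = (a / b) ^ w * b := by
        rw [div_rpow ha.le hb.le, rpow_sub hb, rpow_one]
        field_simp
    _ < (1 + w * (a / b - 1)) * b := h2
    _ = w * a + (1 - w) * b := by field_simp; ring

lemma key_ineq_aux {t r p q : ℝ} (ht : 0 ≤ t) (hr : 0 < r) (hrp : r < p) (hpq : p < q) :
    t ^ p ≤ (q - p) / (q - r) * t ^ r + (p - r) / (q - r) * t ^ q ∧
    ((q - p) / (q - r) * t ^ r + (p - r) / (q - r) * t ^ q = t ^ p → t = 0 ∨ t = 1) := by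
  have hqr : 0 < q - r := by linarith
  set w : ℝ := (q - p) / (q - r) with hwdef
  have hw : 0 < w := div_pos (by linarith) hqr
  have hw1 : w < 1 := (div_lt_one hqr).2 (by linarith)
  have hw' : (p - r) / (q - r) = 1 - w := by rw [hwdef]; field_simp; ring
  rcases eq_or_lt_of_le ht with h0 | h0
  · rw [← h0]
    rw [Real.zero_rpow hr.ne', Real.zero_rpow (by linarith : p ≠ 0),
      Real.zero_rpow (by linarith : q ≠ 0)]
    exact ⟨by simp, fun _ => Or.inl rfl⟩
  · have htp : t ^ p = (t ^ r) ^ w * (t ^ q) ^ (1 - w) := by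
      rw [← Real.rpow_mul ht, ← Real.rpow_mul ht, ← Real.rpow_add h0]
      congr 1
      rw [hwdef]; field_simp; ring
    rw [hw']
    by_cases h1 : t = 1
    · subst h1; simp
    · have hab : t ^ r ≠ t ^ q := by
        rcases lt_or_gt_of_ne h1 with hlt | hgt
        · exact ne_of_gt (Real.rpow_lt_rpow_of_exponent_gt h0 hlt (by linarith))
        · exact ne_of_lt (Real.rpow_lt_rpow_of_exponent_lt hgt (by linarith))
      have := strict_amgm_aux hw hw1 (Real.rpow_pos_of_pos h0 r)
        (Real.rpow_pos_of_pos h0 q) hab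
      rw [← htp] at this
      exact ⟨this.le, fun h => absurd h (by linarith)⟩

theorem khot_of_three_power_sums {M K : ℕ} (hK : 0 < K) (hKM : K ≤ M)
    (x : Fin M → ℝ) (hx : ∀ i, 0 ≤ x i) (r p q : ℝ)
    (hr : 0 < r) (hrp : r < p) (hpq : p < q)
    (hsr : ∑ i, x i ^ r = (K : ℝ))
    (hsp : ∑ i, x i ^ p = (K : ℝ))
    (hsq : ∑ i, x i ^ q = (K : ℝ)) :
    KHot x K := by
  have hqr : 0 < q - r := by linarith
  set w : ℝ := (q - p) / (q - r) with hwdef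
  set w' : ℝ := (p - r) / (q - r) with hw'def
  -- each term of F is nonneg, sum of F is zero
  have hF : ∀ i ∈ Finset.univ, 0 ≤ w * x i ^ r + w' * x i ^ q - x i ^ p := by
    intro i _
    have := (key_ineq_aux (hx i) hr hrp hpq).1
    linarith
  have hww' : w + w' = 1 := by rw [hwdef, hw'def]; field_simp; ring
  have hsum : ∑ i, (w * x i ^ r + w' * x i ^ q - x i ^ p) = 0 := by
    simp only [Finset.sum_sub_distrib, Finset.sum_add_distrib, ← Finset.mul_sum,
      hsr, hsp, hsq]
    nlinarith [hww']
  have heach := (Finset.sum_eq_zero_iff_of_nonneg hF).1 hsum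
  have hbin : ∀ i, x i = 1 ∨ x i = 0 := by
    intro i
    have h := heach i (Finset.mem_univ i)
    have := (key_ineq_aux (hx i) hr hrp hpq).2 (by linarith)
    tauto
  refine ⟨?_, hbin⟩
  -- count: ∑ x i ^ r = card of ones
  have hcount : ∑ i, x i ^ r
      = ((Finset.univ.filter (fun i => x i = 1)).card : ℝ) := by
    rw [Finset.card_filter]
    push_cast
    refine Finset.sum_congr rfl ?_
    intro i _
    rcases hbin i with h1 | h0
    · simp [h1]
    · simp [h0, Real.zero_rpow hr.ne', (by linarith [hbin i] : x i ≠ 1)]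
  rw [hcount] at hsr
  exact_mod_cast hsr
end

section
/- Let x_1, ..., x_L be strictly positive reals and 0 < r < p < q. If ∑_{i=1}^L x_i^p = (∑_{i=1}^L x_i^r)^{(q−p)/(q−r)} · (∑_{i=1}^L x_i^q)^{(p−r)/(q−r)}, then all the x_i are equal, i.e., x_1 = x_2 = ⋯ = x_L. -/
open Real Finset

lemma amgm2_strict {u v a b : ℝ} (hu : 0 < u) (hv : 0 < v) (ha : 0 < a) (hb : 0 < b)
    (hab : a + b = 1) (huv : u ≠ v) : u ^ a * v ^ b < a * u + b * v := by
  have h := strictConcaveOn_log_Ioi.2 (Set.mem_Ioi.2 hu) (Set.mem_Ioi.2 hv) huv ha hb hab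
  simp only [smul_eq_mul] at h
  have h1 : u ^ a * v ^ b = Real.exp (a * Real.log u + b * Real.log v) := by
    rw [Real.exp_add, ← Real.log_rpow hu, ← Real.log_rpow hv, Real.exp_log (rpow_pos_of_pos hu a),
      Real.exp_log (rpow_pos_of_pos hv b)]
  have h2 : a * u + b * v = Real.exp (Real.log (a * u + b * v)) := by
    rw [Real.exp_log (by positivity)]
  rw [h1, h2]
  exact Real.exp_lt_exp.2 h

lemma amgm2_eq {u v a b : ℝ} (hu : 0 < u) (hv : 0 < v) (ha : 0 < a) (hb : 0 < b)
    (hab : a + b = 1) (h : u ^ a * v ^ b = a * u + b * v) : u = v := by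
  by_contra huv
  exact absurd h (ne_of_lt (amgm2_strict hu hv ha hb hab huv))

theorem power_sum_interpolation_equality_case {L : ℕ} (x : Fin L → ℝ)
    (hx : ∀ i, 0 < x i) (r p q : ℝ) (hr : 0 < r) (hrp : r < p) (hpq : p < q)
    (heq : ∑ i, x i ^ p =
      (∑ i, x i ^ r) ^ ((q - p) / (q - r)) * (∑ i, x i ^ q) ^ ((p - r) / (q - r))) :
    ∀ i j, x i = x j := by
  intro i j
  haveI : Nonempty (Fin L) := ⟨i⟩
  set a : ℝ := (q - p) / (q - r) with ha_def
  set b : ℝ := (p - r) / (q - r) with hb_def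
  have hqr : (0:ℝ) < q - r := by linarith
  have ha : 0 < a := div_pos (by linarith) hqr
  have hb : 0 < b := div_pos (by linarith) hqr
  have hab : a + b = 1 := by
    rw [ha_def, hb_def, ← add_div, show q - p + (p - r) = q - r by ring, div_self hqr.ne']
  have hSr : 0 < ∑ k, x k ^ r := Finset.sum_pos (fun k _ => rpow_pos_of_pos (hx k) r) univ_nonempty
  have hSq : 0 < ∑ k, x k ^ q := Finset.sum_pos (fun k _ => rpow_pos_of_pos (hx k) q) univ_nonempty
  set Sr := ∑ k, x k ^ r
  set Sq := ∑ k, x k ^ q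
  set u : Fin L → ℝ := fun k => x k ^ r / Sr with hu_def
  set v : Fin L → ℝ := fun k => x k ^ q / Sq with hv_def
  have hu : ∀ k, 0 < u k := fun k => div_pos (rpow_pos_of_pos (hx k) r) hSr
  have hv : ∀ k, 0 < v k := fun k => div_pos (rpow_pos_of_pos (hx k) q) hSq
  have hA : 0 < Sr ^ a := rpow_pos_of_pos hSr a
  have hB : 0 < Sq ^ b := rpow_pos_of_pos hSq b
  -- termwise identity
  have hterm : ∀ k, u k ^ a * v k ^ b = x k ^ p / (Sr ^ a * Sq ^ b) := by
    intro k
    have hp_eq : r * a + q * b = p := by rw [ha_def, hb_def]; field_simp; ring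
    rw [hu_def, hv_def]
    rw [Real.div_rpow (le_of_lt (rpow_pos_of_pos (hx k) r)) hSr.le,
      Real.div_rpow (le_of_lt (rpow_pos_of_pos (hx k) q)) hSq.le,
      ← Real.rpow_mul (hx k).le, ← Real.rpow_mul (hx k).le]
    rw [div_mul_div_comm, ← Real.rpow_add (hx k), hp_eq]
  -- sums
  have hsum1 : ∑ k, u k ^ a * v k ^ b = 1 := by
    rw [Finset.sum_congr rfl (fun k _ => hterm k), ← Finset.sum_div, heq]
    field_simp
  have hsum2 : ∑ k, (a * u k + b * v k) = 1 := by
    rw [Finset.sum_add_distrib, ← Finset.mul_sum, ← Finset.mul_sum, hu_def, hv_def]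
    simp only [← Finset.sum_div]
    rw [div_self hSr.ne', div_self hSq.ne', mul_one, mul_one, hab]
  have hle : ∀ k ∈ Finset.univ, u k ^ a * v k ^ b ≤ a * u k + b * v k := fun k _ =>
    Real.geom_mean_le_arith_mean2_weighted ha.le hb.le (hu k).le (hv k).le hab
  have hall : ∀ k ∈ Finset.univ, u k ^ a * v k ^ b = a * u k + b * v k := by
    rw [← Finset.sum_eq_sum_iff_of_le hle]
    rw [hsum1, hsum2]
  have key : ∀ k : Fin L, x k ^ (q - r) = Sq / Sr := by
    intro k
    have h := amgm2_eq (hu k) (hv k) ha hb hab (hall k (Finset.mem_univ k))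
    rw [hu_def, hv_def] at h
    have hxr : (0:ℝ) < x k ^ r := rpow_pos_of_pos (hx k) r
    rw [Real.rpow_sub (hx k)]
    rw [div_eq_div_iff hSr.ne' hSq.ne'] at h
    field_simp
    linarith [h]
  have hkey := (key i).trans (key j).symm
  rcases lt_trichotomy (x i) (x j) with h | h | h
  · exact absurd hkey (ne_of_lt (Real.rpow_lt_rpow (hx i).le h hqr))
  · exact h
  · exact absurd hkey.symm (ne_of_lt (Real.rpow_lt_rpow (hx j).le h hqr))
end

section
/- Let x ∈ ℝ^M with x_i ≥ 0 satisfy ‖x‖_1 = K, ‖x‖_2² = K and ‖x‖_3³ = K with K ≤ M a positive integer. Then for every index i, x_i ∈ {0, 1}. -/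
theorem three_power_sums_force_binary {M K : ℕ} (hK : 0 < K) (hKM : K ≤ M)
    (x : Fin M → ℝ) (hx : ∀ i, 0 ≤ x i)
    (h1 : ∑ i, x i = (K : ℝ)) (h2 : ∑ i, x i ^ 2 = (K : ℝ))
    (h3 : ∑ i, x i ^ 3 = (K : ℝ)) :
    ∀ i, x i = 0 ∨ x i = 1 := by
  have hsum : ∑ i, x i * (x i - 1) ^ 2 = 0 := by
    have : ∑ i, x i * (x i - 1) ^ 2
        = ∑ i, (x i ^ 3 - 2 * x i ^ 2 + x i) := by
      apply Finset.sum_congr rfl; intro i _; ring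
    rw [this, Finset.sum_add_distrib, Finset.sum_sub_distrib, h1, h3]
    have : ∑ i, 2 * x i ^ 2 = 2 * (K : ℝ) := by
      rw [← Finset.mul_sum, h2]
    rw [this]; ring
  have hnn : ∀ i ∈ Finset.univ, 0 ≤ x i * (x i - 1) ^ 2 := fun i _ =>
    mul_nonneg (hx i) (sq_nonneg _)
  intro i
  have hz : x i * (x i - 1) ^ 2 = 0 :=
    (Finset.sum_eq_zero_iff_of_nonneg hnn).mp hsum i (Finset.mem_univ i)
  rcases mul_eq_zero.mp hz with h | h
  · exact Or.inl h
  · exact Or.inr (by nlinarith [pow_eq_zero_iff (n := 2) two_ne_zero |>.mp h])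
end

section
/- Let x_1, ..., x_L be strictly positive reals and let 0 < r < p < q. If ∑_{i=1}^L x_i^r = ∑_{i=1}^L x_i^p = ∑_{i=1}^L x_i^q = K, then the x_i must all be equal. -/
theorem three_equal_power_sums_force_constant {L : ℕ} (x : Fin L → ℝ)
    (hx : ∀ i, 0 < x i) (r p q K : ℝ) (hr : 0 < r) (hrp : r < p) (hpq : p < q)
    (hsr : ∑ i, x i ^ r = K) (hsp : ∑ i, x i ^ p = K)
    (hsq : ∑ i, x i ^ q = K) :
    ∀ i j, x i = x j := by
  intro i j
  haveI : Nonempty (Fin L) := ⟨i⟩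
  have hK : 0 < K := by
    rw [← hsr]
    exact Finset.sum_pos (fun k _ => Real.rpow_pos_of_pos (hx k) r) Finset.univ_nonempty
  set θ : ℝ := (p - r) / (q - r) with hθdef
  have hqr : 0 < q - r := by linarith
  have hθ0 : 0 < θ := div_pos (by linarith) hqr
  have hθ1 : θ < 1 := (div_lt_one hqr).2 (by linarith)
  set w : Fin L → ℝ := fun k => x k ^ r / K with hw
  set t : Fin L → ℝ := fun k => x k ^ (q - r) with ht
  have hw0 : ∀ k ∈ Finset.univ, 0 < w k := fun k _ =>
    div_pos (Real.rpow_pos_of_pos (hx k) r) hK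
  have hw1 : ∑ k, w k = 1 := by
    rw [hw, ← Finset.sum_div, hsr, div_self hK.ne']
  have hmem : ∀ k ∈ Finset.univ, t k ∈ Set.Ici (0:ℝ) :=
    fun k _ => (Real.rpow_pos_of_pos (hx k) _).le
  have hwt : ∑ k, w k • t k = 1 := by
    have : ∀ k, w k • t k = x k ^ q / K := by
      intro k
      rw [hw, ht]
      simp only [smul_eq_mul]
      rw [div_mul_eq_mul_div, ← Real.rpow_add (hx k)]
      ring_nf
    simp only [this]
    rw [← Finset.sum_div, hsq, div_self hK.ne']
  have hwft : ∑ k, w k • (t k ^ θ) = 1 := by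
    have : ∀ k, w k • (t k ^ θ) = x k ^ p / K := by
      intro k
      rw [hw, ht]
      simp only [smul_eq_mul]
      rw [← Real.rpow_mul (hx k).le, hθdef,
        mul_div_cancel₀ _ hqr.ne', div_mul_eq_mul_div, ← Real.rpow_add (hx k)]
      ring_nf
    simp only [this]
    rw [← Finset.sum_div, hsp, div_self hK.ne']
  have hconc := Real.strictConcaveOn_rpow hθ0 hθ1
  have heq : (fun y : ℝ => y ^ θ) (∑ k, w k • t k) ≤ ∑ k, w k • ((fun y : ℝ => y ^ θ) (t k)) := by
    simp only [hwt, hwft, Real.one_rpow, le_refl]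
  have hall := hconc.eq_of_map_sum_eq hw0 hw1 hmem heq
  have htij : t i = t j := hall (Finset.mem_univ i) (Finset.mem_univ j)
  have : ∀ k, x k = (t k) ^ (q - r)⁻¹ := by
    intro k
    rw [ht, ← Real.rpow_mul (hx k).le, mul_inv_cancel₀ hqr.ne', Real.rpow_one]
  rw [this i, this j, htij]
end

section
/- Let K, M be positive integers with K ≤ M and let x ∈ ℝ^M be K-hot (exactly K entries equal 1, the rest 0). Then x minimizes the penalty (‖x‖_2² − K)² + (‖x‖_3³ − K)² over all nonnegative vectors with ‖x‖_1 = K, achieving penalty value 0; conversely any nonnegative x with ‖x‖_1 = K achieving penalty 0 is K-hot. -/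
noncomputable def penalty {M : ℕ} (K : ℕ) (x : Fin M → ℝ) : ℝ :=
  ((∑ i, x i ^ 2) - K) ^ 2 + ((∑ i, x i ^ 3) - K) ^ 2

lemma sum_pow_khot {M : ℕ} (x : Fin M → ℝ) (h : ∀ i, x i = 1 ∨ x i = 0) (n : ℕ) (hn : n ≠ 0) :
    ∑ i, x i ^ n = ((Finset.univ.filter (fun i => x i = 1)).card : ℝ) := by
  rw [← Finset.sum_boole]
  refine Finset.sum_congr rfl fun i _ => ?_
  rcases h i with h1 | h0
  · simp [h1]
  · simp [h0, zero_pow hn]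

theorem khot_minimizes_selnet_penalty {M K : ℕ} (hK : 0 < K) (hKM : K ≤ M) :
    (∀ x : Fin M → ℝ, KHot x K →
      penalty K x = 0 ∧
      ∀ y : Fin M → ℝ, (∀ i, 0 ≤ y i) → ∑ i, y i = (K : ℝ) →
        penalty K x ≤ penalty K y) ∧
    (∀ y : Fin M → ℝ, (∀ i, 0 ≤ y i) → ∑ i, y i = (K : ℝ) →
      penalty K y = 0 → KHot y K) := by
  constructor
  · intro x hx
    obtain ⟨hcard, hmem⟩ := hx
    have h2 := sum_pow_khot x hmem 2 (by norm_num)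
    have h3 := sum_pow_khot x hmem 3 (by norm_num)
    have hp : penalty K x = 0 := by
      simp [penalty, h2, h3, hcard]
    refine ⟨hp, fun y _ _ => ?_⟩
    rw [hp]
    unfold penalty
    positivity
  · intro y hy hsum hp
    have h2 : ∑ i, y i ^ 2 = (K : ℝ) := by
      have := sq_nonneg ((∑ i, y i ^ 2) - K)
      have := sq_nonneg ((∑ i, y i ^ 3) - K)
      unfold penalty at hp; nlinarith
    have h3 : ∑ i, y i ^ 3 = (K : ℝ) := by
      have := sq_nonneg ((∑ i, y i ^ 2) - K)
      have := sq_nonneg ((∑ i, y i ^ 3) - K)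
      unfold penalty at hp; nlinarith
    have hzero : ∑ i, y i * (y i - 1) ^ 2 = 0 := by
      have e : ∑ i, y i * (y i - 1) ^ 2 = ∑ i, (y i ^ 3 - 2 * y i ^ 2 + y i) :=
        Finset.sum_congr rfl fun i _ => by ring
      rw [e, Finset.sum_add_distrib, Finset.sum_sub_distrib, ← Finset.mul_sum,
        h2, h3, hsum]; ring
    have hnn : ∀ i ∈ Finset.univ, 0 ≤ y i * (y i - 1) ^ 2 := fun i _ =>
      mul_nonneg (hy i) (sq_nonneg _)
    have heach := (Finset.sum_eq_zero_iff_of_nonneg hnn).mp hzero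
    have hmem : ∀ i, y i = 1 ∨ y i = 0 := by
      intro i
      have := heach i (Finset.mem_univ i)
      rcases mul_eq_zero.mp this with h | h
      · exact Or.inr h
      · exact Or.inl (by nlinarith [sq_nonneg (y i - 1)])
    refine ⟨?_, hmem⟩
    have := sum_pow_khot y hmem 1 (by norm_num)
    simp only [pow_one] at this
    rw [hsum] at this
    exact_mod_cast this.symm
end
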